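/- arXiv:1901.06816 — 2 statements merged into one kernel-verified Lean document; each statement's English description precedes it below -/
import Mathlib

section
/- Let R be a ring, P a dg-projective cochain complex of R-modules, and f : M → M' a quasi-isomorphism of cochain complexes of R-modules. Then the map Hom^•(P,M) → Hom^•(P,M') given in each degree by postcomposition with f is a quasi-isomorphism of cochain complexes. -/
/-!
STATEMENT 0: Let R be a ring, P a dg-projective cochain complex of R-modules, and
f : M ⟶ M' a quasi-isomorphism of cochain complexes of R-modules. Then the map
Hom^•(P,M) → Hom^•(P,M') given in each degree by postcomposition with f is a
quasi-isomorphism of cochain complexes.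
-/

open CategoryTheory CategoryTheory.Limits CochainComplex CochainComplex.HomComplex

/-- A cochain complex of `R`-modules is dg-projective if each of its components is a
projective `R`-module and every chain map from it to an acyclic complex is
null-homotopic. -/
def IsDGProjective {R : Type} [Ring R] (P : CochainComplex (ModuleCat R) ℤ) : Prop :=
  (∀ i : ℤ, Module.Projective R (P.X i)) ∧
  ∀ (C : CochainComplex (ModuleCat R) ℤ), (∀ i : ℤ, IsZero (C.homology i)) →
    ∀ g : P ⟶ C, Nonempty (Homotopy g 0)

/-!
The `n`-th cohomology of `Hom^•(P, M)` is the group of morphisms `P ⟶ M⟦n⟧` in the homotopy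
category, and postcomposition with `f` becomes composition with `f⟦n⟧`. A dg-projective complex
is K-projective, i.e. left orthogonal to the acyclic complexes; in the triangulated homotopy
category such an object is colocal for the morphisms with acyclic cone, which are exactly the
images of quasi-isomorphisms. So composition with `f⟦n⟧` is bijective on maps out of `P`.
-/

namespace CochainComplex.HomComplex

variable {C : Type*} [Category C] [Preadditive C] (K : CochainComplex C ℤ)
  {L L' : CochainComplex C ℤ} (f : L ⟶ L')

def postcomp : HomComplex K L ⟶ HomComplex K L' where
  f n := AddCommGrpCat.ofHom
    { toFun := fun α ↦ α.comp (Cochain.ofHom f) (add_zero n)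
      map_zero' := Cochain.zero_comp _ _
      map_add' := fun α β ↦ Cochain.add_comp α β _ (add_zero n) }
  comm' i j _ := by
    ext (α : Cochain K L i)
    exact δ_comp_ofHom α f j

def Cocycle.postcompAddHom (n : ℤ) : Cocycle K L n →+ Cocycle K L' n where
  toFun z := z.postcomp f
  map_zero' := by ext : 1; simp
  map_add' z₁ z₂ := by ext : 1; simp [Cochain.add_comp]

namespace CohomologyClass

def postcomp (n : ℤ) : CohomologyClass K L n →+ CohomologyClass K L' n :=
  descAddMonoidHom ((mkAddMonoidHom K L' n).comp (Cocycle.postcompAddHom K f n)) (by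
    rintro z ⟨m, hm, β, hβ⟩
    rw [AddMonoidHom.mem_ker, AddMonoidHom.comp_apply]
    refine (mk_eq_zero_iff _).2 ⟨m, hm, β.comp (Cochain.ofHom f) (add_zero m), ?_⟩
    simp [Cocycle.postcompAddHom, hβ])

lemma postcomp_mk {n : ℤ} (z : Cocycle K L n) : postcomp K f n (mk z) = mk (z.postcomp f) := rfl

lemma toHom_postcomp {n : ℤ} (x : CohomologyClass K L n) :
    toHom (postcomp K f n x) = toHom x ≫ (HomotopyCategory.quotient C _).map (f⟦n⟧') := by
  obtain ⟨z, rfl⟩ := x.mk_surjective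
  rw [postcomp_mk, toHom_mk, toHom_mk, ← Functor.map_comp, ← Cocycle.equivHomShift_symm_postcomp]

end CohomologyClass

def postcompLeftHomologyMapData (n : ℤ) :
    ShortComplex.LeftHomologyMapData
      ((HomologicalComplex.shortComplexFunctor _ _ n).map (postcomp K f))
      (leftHomologyData K L n) (leftHomologyData K L' n) :=
  let φK : (leftHomologyData K L n).K ⟶ (leftHomologyData K L' n).K :=
    AddCommGrpCat.ofHom (Cocycle.postcompAddHom K f n)
  have commi : φK ≫ (leftHomologyData K L' n).i = (leftHomologyData K L n).i ≫
      ((HomologicalComplex.shortComplexFunctor _ _ n).map (postcomp K f)).τ₂ := rfl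
  { φK := φK
    φH := AddCommGrpCat.ofHom (CohomologyClass.postcomp K f n)
    commi := commi
    commf' := by
      rw [← cancel_mono (leftHomologyData K L' n).i]
      simp only [Category.assoc, commi, ShortComplex.LeftHomologyData.f'_i_assoc,
        ShortComplex.LeftHomologyData.f'_i, ShortComplex.Hom.comm₁₂] }

lemma quasiIsoAt_postcomp_iff (n : ℤ) :
    QuasiIsoAt (postcomp K f) n ↔ Function.Bijective (CohomologyClass.postcomp K f n) := by
  rw [quasiIsoAt_iff, (postcompLeftHomologyMapData K f n).quasiIso_iff,
    ConcreteCategory.isIso_iff_bijective]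
  rfl

lemma quasiIsoAt_postcomp_iff_bijective_comp (n : ℤ) :
    QuasiIsoAt (postcomp K f) n ↔ Function.Bijective
      (fun g : (HomotopyCategory.quotient C _).obj K ⟶ (HomotopyCategory.quotient C _).obj (L⟦n⟧) ↦
        g ≫ (HomotopyCategory.quotient C _).map (f⟦n⟧')) := by
  have h : CohomologyClass.homAddEquiv ∘ CohomologyClass.postcomp K f n =
      (· ≫ (HomotopyCategory.quotient C _).map (f⟦n⟧')) ∘ CohomologyClass.homAddEquiv :=
    funext (CohomologyClass.toHom_postcomp K f)
  rw [quasiIsoAt_postcomp_iff,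
    ← Function.Bijective.of_comp_iff' CohomologyClass.homAddEquiv.bijective, h,
    Function.Bijective.of_comp_iff _ CohomologyClass.homAddEquiv.bijective]

end CochainComplex.HomComplex

namespace CochainComplex.IsKProjective

variable {C : Type*} [Category C] [Abelian C] (K : CochainComplex C ℤ) [K.IsKProjective]
  {L L' : CochainComplex C ℤ} (f : L ⟶ L') [QuasiIso f]

lemma bijective_comp_quotient_map :
    Function.Bijective (fun g : (HomotopyCategory.quotient C _).obj K ⟶
      (HomotopyCategory.quotient C _).obj L ↦ g ≫ (HomotopyCategory.quotient C _).map f) := by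
  have hf : (HomotopyCategory.subcategoryAcyclic C).trW
      ((HomotopyCategory.quotient C _).map f) := by
    rw [← HomotopyCategory.quasiIso_eq_trW_subcategoryAcyclic,
      HomotopyCategory.quotient_map_mem_quasiIso_iff, HomologicalComplex.mem_quasiIso_iff]
    infer_instance
  have hK := leftOrthogonal K
  rw [← ObjectProperty.isColocal_trW] at hK
  exact hK _ hf

lemma quasiIso_postcomp : QuasiIso (HomComplex.postcomp K f) where
  quasiIsoAt n := (HomComplex.quasiIsoAt_postcomp_iff_bijective_comp K f n).2
    (bijective_comp_quotient_map K (f⟦n⟧'))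

end CochainComplex.IsKProjective

lemma IsDGProjective.isKProjective {R : Type} [Ring R] {P : CochainComplex (ModuleCat R) ℤ}
    (hP : IsDGProjective P) : P.IsKProjective where
  nonempty_homotopy_zero g hC :=
    hP.2 _ (fun i ↦ (HomologicalComplex.exactAt_iff_isZero_homology _ i).1 (hC i)) g

theorem quasiIso_homComplex_postcomp
    {R : Type} [Ring R] (P M M' : CochainComplex (ModuleCat R) ℤ)
    (hP : IsDGProjective P)
    (f : M ⟶ M') (hf : QuasiIso f) :
    ∃ Φ : HomComplex P M ⟶ HomComplex P M',
      (∀ (n : ℤ) (α : Cochain P M n),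
        Φ.f n α = α.comp (Cochain.ofHom f) (add_zero n)) ∧
      QuasiIso Φ := by
  have := hP.isKProjective
  exact ⟨HomComplex.postcomp P f, fun _ _ ↦ rfl, IsKProjective.quasiIso_postcomp P f⟩
end

section
/- Let R be a ring, P a bounded cochain complex of projective R-modules, and M any cochain complex of R-modules. Then the localization functor from the homotopy category K(R) to the derived category D(R) induces a bijection Hom_{K(R)}(P, M) → Hom_{D(R)}(P, M); that is, morphisms P → M in the derived category are in natural bijection with chain maps P → M modulo chain homotopy. -/
/-!
A bounded above complex of projectives is K-projective: every chain map from it to an acyclic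
complex is null-homotopic. Such a complex is left orthogonal to the acyclic complexes in the
homotopy category, and for objects in this left orthogonal the localization functor to the
derived category is bijective on morphisms.
-/

open CategoryTheory CategoryTheory.Limits

lemma CochainComplex.isKProjective_of_module_projective {R : Type*} [Ring R]
    (P : CochainComplex (ModuleCat R) ℤ) (b : ℤ) (hPbdd : ∀ i : ℤ, b < i → IsZero (P.X i))
    (hPproj : ∀ i : ℤ, Module.Projective R (P.X i)) :
    P.IsKProjective :=
  have : P.IsStrictlyLE b := (P.isStrictlyLE_iff b).2 hPbdd
  P.isKProjective_of_projective b

theorem homotopyCategory_hom_equiv_derivedCategory_hom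
    {R : Type} [Ring R] [HasDerivedCategory (ModuleCat R)]
    (P M : CochainComplex (ModuleCat R) ℤ)
    (hPbdd : ∃ a b : ℤ, ∀ i : ℤ, (i < a ∨ b < i) → IsZero (P.X i))
    (hPproj : ∀ i : ℤ, Module.Projective R (P.X i)) :
    Function.Bijective
      (fun (f : (HomotopyCategory.quotient (ModuleCat R) (ComplexShape.up ℤ)).obj P ⟶
          (HomotopyCategory.quotient (ModuleCat R) (ComplexShape.up ℤ)).obj M) =>
        DerivedCategory.Qh.map f) := by
  obtain ⟨_, b, hb⟩ := hPbdd
  have : P.IsKProjective :=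
    P.isKProjective_of_module_projective b (fun i hi ↦ hb i (Or.inr hi)) hPproj
  exact CochainComplex.IsKProjective.Qh_map_bijective P _
end
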